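/- arXiv:2308.02378 — 5 statements merged into one kernel-verified Lean document; each statement's English description precedes it below -/
import Mathlib

section
/- Let K and L be o-symmetric convex disks in ℝ² such that the boundary of K contains a segment [p,q] with p ≠ q, and assume d_PM(K, L) < ∞. Then the boundary of L contains a translate of [p,q] (in particular, a segment of the same length and direction): there exists v ∈ ℝ² with v + [p,q] ⊆ bd L. -/
open Set MeasureTheory Metric Filter Pointwise
open scoped RealInnerProductSpace ENNReal Topology

noncomputable section

/-- The Euclidean plane. -/
abbrev E2 : Type := EuclideanSpace ℝ (Fin 2)

/-- The vector of `ℝ²` with given coordinates. -/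
def vec2 (a b : ℝ) : E2 := (WithLp.equiv 2 (Fin 2 → ℝ)).symm ![a, b]

/-- The determinant of the `2 × 2` matrix with columns `u`, `v`. -/
def det2 (u v : E2) : ℝ := u 0 * v 1 - u 1 * v 0

/-- Rotation of the plane by `π/2` about the origin. -/
def Jrot (u : E2) : E2 := vec2 (-(u 1)) (u 0)

/-- The unit vector with direction angle `φ`. -/
def angleVec (φ : ℝ) : E2 := vec2 (Real.cos φ) (Real.sin φ)

/-- A convex disk: a compact convex set in the plane with nonempty interior. -/
def IsConvexDisk (K : Set E2) : Prop := IsCompact K ∧ Convex ℝ K ∧ (interior K).Nonempty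

/-- An `o`-symmetric convex disk. -/
def IsOSymmDisk (K : Set E2) : Prop := IsConvexDisk K ∧ K = -K

/-- `K` is a `C`-convex disk: a convex disk that is the intersection of a family of
translates of `C`. -/
def IsCConvexDisk (C K : Set E2) : Prop :=
  IsConvexDisk K ∧ ∃ X : Set E2, X.Nonempty ∧ K = ⋂ x ∈ X, x +ᵥ C

/-- The `C`-spindle of `p` and `q`: the intersection of all translates of `C` containing
both `p` and `q` (the whole plane if there is no such translate). -/
def spindle (C : Set E2) (p q : E2) : Set E2 :=
  ⋂ x ∈ {x : E2 | p ∈ x +ᵥ C ∧ q ∈ x +ᵥ C}, x +ᵥ C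

/-- The closed half-plane bounded by the line through `p` and `q` lying to the right of the
directed chord from `p` to `q`; it is the one containing the counterclockwise boundary
arc from `p` to `q`. -/
def Hside (p q : E2) : Set E2 := {x : E2 | det2 (q - p) (x - p) ≤ 0}

/-- The area of the region `r_K(p,q)` bounded by the counterclockwise boundary arc of `K`
from `p` to `q` and the counterclockwise arc of `bd [p,q]_C` from `p` to `q`. -/
def rArea (C K : Set E2) (p q : E2) : ℝ :=
  (volume (K ∩ Hside p q)).toReal - (volume (spindle C p q ∩ Hside p q)).toReal

/-- The counterclockwise boundary arc of `K` from `p` to `q`. -/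
def arcCCW (K : Set E2) (p q : E2) : Set E2 := frontier K ∩ Hside p q

/-- `u` is an outer normal vector of `K` at `p`. -/
def IsOuterNormal (K : Set E2) (p u : E2) : Prop := ∀ x ∈ K, (inner ℝ (x - p) u : ℝ) ≤ 0

/-- `q` is antipodal to `p`: `K` has parallel supporting lines at `p` and `q`. -/
def Antipodal (K : Set E2) (p q : E2) : Prop :=
  ∃ u : E2, u ≠ 0 ∧ IsOuterNormal K p u ∧ IsOuterNormal K q (-u)

/-- The counterclockwise arc of `bd K` from `p` to `q` has turning angle strictly less
than `π`: it contains no point antipodal to `p`. -/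
def ArcLtPi (K : Set E2) (p q : E2) : Prop := ∀ x ∈ arcCCW K p q, ¬ Antipodal K p x

/-- `x1, x2, x3, x4` are points of `bd K` in counterclockwise order. -/
def CCW4 (K : Set E2) (x1 x2 x3 x4 : E2) : Prop :=
  x1 ∈ frontier K ∧ x2 ∈ frontier K ∧ x3 ∈ frontier K ∧ x4 ∈ frontier K ∧
  [x1, x2, x3, x4].Pairwise (· ≠ ·) ∧
  x2 ∈ arcCCW K x1 x3 ∧ x3 ∈ arcCCW K x2 x4 ∧ x4 ∈ arcCCW K x3 x1 ∧ x1 ∈ arcCCW K x4 x2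

/-- The Quadrangle Property of an `o`-symmetric convex disk `C`. -/
def QuadrangleProperty (C : Set E2) : Prop :=
  ∀ K : Set E2, IsCConvexDisk C K → ∀ x1 x2 x3 x4 : E2, CCW4 K x1 x2 x3 x4 →
    ArcLtPi K x1 x4 →
    rArea C K x1 x3 + rArea C K x2 x4 ≤ rArea C K x1 x4 + rArea C K x2 x3

/-- `P` is a `C`-`n`-gon: the intersection of `n` translates of `C`. -/
def IsCngon (C : Set E2) (n : ℕ) (P : Set E2) : Prop :=
  ∃ f : Fin n → E2, P = ⋂ i, f i +ᵥ C

/-- `â_n^C(K)`: the supremum of the areas of `C`-`n`-gons contained in `K`. -/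
def hatA (C : Set E2) (n : ℕ) (K : Set E2) : ℝ :=
  sSup {a : ℝ | ∃ P : Set E2, IsCngon C n P ∧ P ⊆ K ∧ a = (volume P).toReal}

/-- The surface area measure of a Borel set `σ ⊆ S¹` with respect to a convex disk `K`. -/
def saMeasure (K : Set E2) (σ : Set E2) : ℝ≥0∞ :=
  μH[1] {p : E2 | p ∈ frontier K ∧ ∃ u ∈ σ, IsOuterNormal K p u}

/-- The perimeter-measure distance of two `o`-symmetric convex disks. -/
def dPM (C D : Set E2) : ℝ≥0∞ :=
  sInf {τ : ℝ≥0∞ | ∀ σ : Set E2, σ ⊆ sphere (0 : E2) 1 → MeasurableSet σ →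
    saMeasure C σ - saMeasure D σ ≤ τ * μH[1] σ ∧
    saMeasure D σ - saMeasure C σ ≤ τ * μH[1] σ}

/-- Membership in `K_{o,2+}`: an `o`-symmetric convex disk whose boundary is a
`C²`-smooth curve with everywhere strictly positive curvature (witnessed by a periodic
counterclockwise arclength parametrization). -/
def MemK2Plus (C : Set E2) : Prop :=
  IsOSymmDisk C ∧ ∃ (L : ℝ) (γ : ℝ → E2), 0 < L ∧ ContDiff ℝ 2 γ ∧
    (∀ s, γ (s + L) = γ s) ∧ range γ = frontier C ∧
    (∀ s, ‖deriv γ s‖ = 1) ∧ (∀ s, 0 < det2 (deriv γ s) (deriv (deriv γ) s))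


lemma exists_unit_outer_normal {K : Set E2} (hKv : Convex ℝ K)
    (hKi : (interior K).Nonempty) {m : E2} (hm : m ∈ frontier K) :
    ∃ u : E2, ‖u‖ = 1 ∧ IsOuterNormal K m u := by
  have hmi : m ∉ interior K := hm.2
  obtain ⟨f, hf⟩ := geometric_hahn_banach_open_point (hKv.interior) isOpen_interior hmi
  obtain ⟨x₀, hx₀⟩ := hKi
  have hfa : ∀ a ∈ K, f a ≤ f m := by
    intro a ha
    by_contra hcon
    push_neg at hcon
    have hx0m : f x₀ < f m := hf x₀ hx₀
    set t : ℝ := (f a - f m) / (f a - f x₀) with ht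
    have h1 : (0:ℝ) < f a - f m := by linarith
    have h3 : (0:ℝ) < f a - f x₀ := by linarith
    have ht0 : 0 < t := div_pos h1 h3
    have ht1 : t < 1 := (div_lt_one h3).2 (by linarith)
    have hmem : t • x₀ + (1 - t) • a ∈ interior K :=
      hKv.combo_interior_closure_mem_interior hx₀
        (subset_closure ha) ht0 (by linarith) (by ring)
    have hlt := hf _ hmem
    simp only [map_add, f.map_smul, smul_eq_mul] at hlt
    have heq : t * f x₀ + (1 - t) * f a = f m := by
      rw [ht]; field_simp; ring
    linarith
  set u₀ : E2 := (InnerProductSpace.toDual ℝ E2).symm f with hu₀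
  have hinner : ∀ x : E2, ⟪u₀, x⟫ = f x := fun x => InnerProductSpace.toDual_symm_apply
  have hu₀ne : u₀ ≠ 0 := by
    intro h
    have hlt := hf x₀ hx₀
    have h1 : f x₀ = ⟪u₀, x₀⟫ := (hinner x₀).symm
    have h2 : f m = ⟪u₀, m⟫ := (hinner m).symm
    rw [h1, h2, h, inner_zero_left, inner_zero_left] at hlt
    exact lt_irrefl _ hlt
  refine ⟨‖u₀‖⁻¹ • u₀, ?_, ?_⟩
  · rw [norm_smul, norm_inv, norm_norm, inv_mul_cancel₀ (norm_ne_zero_iff.2 hu₀ne)]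
  · intro x hx
    have hle : ⟪x - m, u₀⟫ ≤ 0 := by
      rw [real_inner_comm, hinner, map_sub]
      linarith [hfa x hx]
    rw [real_inner_smul_right]
    exact mul_nonpos_of_nonneg_of_nonpos (inv_nonneg.2 (norm_nonneg _)) hle

lemma mem_span_of_orth {u w y : E2} (hu : u ≠ 0) (hw : w ≠ 0)
    (hwu : ⟪w, u⟫ = 0) (hyu : ⟪y, u⟫ = 0) : ∃ c : ℝ, y = c • w := by
  have hle : (ℝ ∙ w) ≤ (ℝ ∙ u)ᗮ := by
    rw [Submodule.span_singleton_le_iff_mem, Submodule.mem_orthogonal]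
    intro v hv
    obtain ⟨c, rfl⟩ := Submodule.mem_span_singleton.mp hv
    rw [real_inner_smul_left, real_inner_comm, hwu, mul_zero]
  have h1 : Module.finrank ℝ (ℝ ∙ w) = 1 := finrank_span_singleton hw
  have h2 : Module.finrank ℝ ((ℝ ∙ u)ᗮ : Submodule ℝ E2) = 1 := by
    have h := Submodule.finrank_add_finrank_orthogonal (K := (ℝ ∙ u : Submodule ℝ E2))
    rw [finrank_span_singleton hu] at h
    have hE : Module.finrank ℝ E2 = 2 := finrank_euclideanSpace_fin
    omega
  have heq : (ℝ ∙ w) = (ℝ ∙ u)ᗮ := Submodule.eq_of_le_of_finrank_eq hle (by rw [h1, h2])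
  have hy : y ∈ (ℝ ∙ u)ᗮ := by
    rw [Submodule.mem_orthogonal]
    intro v hv
    obtain ⟨c, rfl⟩ := Submodule.mem_span_singleton.mp hv
    rw [real_inner_smul_left, real_inner_comm, hyu, mul_zero]
  rw [← heq] at hy
  obtain ⟨c, hc⟩ := Submodule.mem_span_singleton.mp hy
  exact ⟨c, hc.symm⟩

/-- if `bd K` contains a segment and `d_PM(K,L) < ∞`, then `bd L` contains a
translate of this segment. -/
theorem segment_of_dPM_lt_top (K L : Set E2) (hK : IsOSymmDisk K) (hL : IsOSymmDisk L)
    (p q : E2) (hpq : p ≠ q) (hseg : segment ℝ p q ⊆ frontier K)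
    (hd : dPM K L < ⊤) :
    ∃ v : E2, v +ᵥ segment ℝ p q ⊆ frontier L := by
  obtain ⟨⟨hKc, hKv, hKi⟩, -⟩ := hK
  obtain ⟨⟨hLc, hLv, hLi⟩, -⟩ := hL
  have hfrK : frontier K ⊆ K := hKc.isClosed.frontier_subset
  have hfrL : frontier L ⊆ L := hLc.isClosed.frontier_subset
  set m : E2 := (2⁻¹ : ℝ) • (p + q) with hm
  have hmseg : m ∈ segment ℝ p q := by
    rw [segment_eq_image']
    exact ⟨1/2, ⟨by norm_num, by norm_num⟩, by rw [hm]; module⟩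
  obtain ⟨u, hu1, hun⟩ := exists_unit_outer_normal hKv hKi (hseg hmseg)
  have hune : u ≠ 0 := by intro h; rw [h, norm_zero] at hu1; norm_num at hu1
  have hpK : p ∈ K := hfrK (hseg (left_mem_segment ℝ p q))
  have hqK : q ∈ K := hfrK (hseg (right_mem_segment ℝ p q))
  have hpm : ⟪p - m, u⟫ ≤ 0 := hun p hpK
  have hqm : ⟪q - m, u⟫ ≤ 0 := hun q hqK
  have hsum : ⟪p - m, u⟫ + ⟪q - m, u⟫ = 0 := by
    rw [← inner_add_left]
    have hz : (p - m) + (q - m) = 0 := by rw [hm]; module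
    rw [hz, inner_zero_left]
  have hpm0 : ⟪p - m, u⟫ = 0 := le_antisymm hpm (by linarith)
  have hqm0 : ⟪q - m, u⟫ = 0 := by linarith
  have hqp0 : ⟪q - p, u⟫ = 0 := by
    have h : q - p = (q - m) - (p - m) := by abel
    rw [h, inner_sub_left, hqm0, hpm0, sub_zero]
  -- u is an outer normal along the whole segment
  have hsegnorm : segment ℝ p q ⊆
      {x : E2 | x ∈ frontier K ∧ ∃ w ∈ ({u} : Set E2), IsOuterNormal K x w} := by
    intro z hz
    refine ⟨hseg hz, u, rfl, ?_⟩
    rw [segment_eq_image'] at hz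
    obtain ⟨t, -, rfl⟩ := hz
    intro x hx
    have h2 : ⟪x - m, u⟫ ≤ 0 := hun x hx
    have h1 : ⟪m - p, u⟫ = 0 := by rw [← neg_sub p m, inner_neg_left, hpm0, neg_zero]
    have hxz : x - (p + t • (q - p)) = (x - m) + ((m - p) - t • (q - p)) := by abel
    have h4 : ⟪(m - p) - t • (q - p), u⟫ = ⟪m - p, u⟫ - t * ⟪q - p, u⟫ := by
      rw [inner_sub_left, real_inner_smul_left]
    rw [hxz, inner_add_left, h4, h1, hqp0]
    linarith
  -- get τ < ⊤ from finiteness of dPM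
  rw [dPM] at hd
  obtain ⟨τ, hτmem, hτlt⟩ := sInf_lt_iff.mp hd
  have husph : ({u} : Set E2) ⊆ sphere (0 : E2) 1 := by
    rintro x rfl
    rwa [mem_sphere_zero_iff_norm]
  haveI : NullSingletonClass (μH[1] : Measure E2) := Measure.nullSingletonClass_hausdorff E2 one_pos
  obtain ⟨h1, -⟩ := hτmem {u} husph (measurableSet_singleton u)
  rw [measure_singleton, mul_zero] at h1
  have hKL : saMeasure K {u} ≤ saMeasure L {u} := tsub_eq_zero_iff_le.mp (le_zero_iff.mp h1)
  have hlow : edist p q ≤ saMeasure K ({u} : Set E2) := by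
    simp only [saMeasure]
    calc edist p q = μH[1] (segment ℝ p q) := (hausdorffMeasure_segment p q).symm
    _ ≤ _ := measure_mono hsegnorm
  set F : Set E2 := {x : E2 | x ∈ frontier L ∧ IsOuterNormal L x u} with hF
  have hFsa : saMeasure L ({u} : Set E2) = μH[1] F := by
    simp only [saMeasure, hF]
    congr 1
    ext x
    constructor
    · rintro ⟨hx, w, hw, hwn⟩
      exact ⟨hx, by rwa [Set.mem_singleton_iff.mp hw] at hwn⟩
    · rintro ⟨hx, hn⟩
      exact ⟨hx, u, rfl, hn⟩
  have hFlow : edist p q ≤ μH[1] F := hFsa ▸ (hlow.trans hKL)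
  have hFL : F ⊆ L := fun x hx => hfrL hx.1
  have hFclosed : IsClosed F := by
    have hset : F = frontier L ∩ {x : E2 | IsOuterNormal L x u} := rfl
    rw [hset]
    refine isClosed_frontier.inter ?_
    have hi : {x : E2 | IsOuterNormal L x u} = ⋂ z ∈ L, {x : E2 | ⟪z - x, u⟫ ≤ 0} := by
      ext x
      simp only [Set.mem_setOf_eq, Set.mem_iInter]
      exact Iff.rfl
    rw [hi]
    exact isClosed_biInter fun z _ => isClosed_le
      (Continuous.inner (continuous_const.sub continuous_id) continuous_const) continuous_const
  have hFcpt : IsCompact F := hLc.of_isClosed_subset hFclosed hFL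
  have hFne : F.Nonempty := by
    rw [nonempty_iff_ne_empty]
    intro h
    rw [h, measure_empty] at hFlow
    exact absurd hFlow (not_le.mpr (edist_pos.mpr hpq))
  -- direction vector
  have hqpne : q - p ≠ 0 := sub_ne_zero.mpr (Ne.symm hpq)
  set w : E2 := ‖q - p‖⁻¹ • (q - p) with hwdef
  have hwnorm : ‖w‖ = 1 := by
    rw [hwdef, norm_smul, norm_inv, norm_norm, inv_mul_cancel₀ (norm_ne_zero_iff.2 hqpne)]
  have hwne : w ≠ 0 := by intro h; rw [h, norm_zero] at hwnorm; norm_num at hwnorm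
  have hwu : ⟪w, u⟫ = 0 := by rw [hwdef, real_inner_smul_left, hqp0, mul_zero]
  have hFinner : ∀ x ∈ F, ∀ y ∈ F, ⟪y - x, u⟫ = 0 := by
    intro x hx y hy
    have h1 : ⟪y - x, u⟫ ≤ 0 := hx.2 y (hFL hy)
    have h2 : ⟪x - y, u⟫ ≤ 0 := hy.2 x (hFL hx)
    have h3 : ⟪x - y, u⟫ = -⟪y - x, u⟫ := by rw [← neg_sub y x, inner_neg_left]
    linarith
  have hgc : ContinuousOn (fun x : E2 => ⟪x, w⟫) F :=
    (Continuous.inner continuous_id continuous_const).continuousOn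
  obtain ⟨a, haF, ha⟩ := hFcpt.exists_isMinOn hFne hgc
  obtain ⟨b, hbF, hb⟩ := hFcpt.exists_isMaxOn hFne hgc
  have hrep : ∀ x ∈ F, x - a = ⟪x - a, w⟫ • w := by
    intro x hx
    obtain ⟨c, hc⟩ := mem_span_of_orth hune hwne hwu (hFinner a haF x hx)
    rw [hc, real_inner_smul_left, real_inner_self_eq_norm_mul_norm, hwnorm, mul_one, mul_one]
  set d : ℝ := ⟪b - a, w⟫ with hddef
  have hcoef : ∀ x ∈ F, 0 ≤ ⟪x - a, w⟫ ∧ ⟪x - a, w⟫ ≤ d := by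
    intro x hx
    have h1 : ⟪a, w⟫ ≤ ⟪x, w⟫ := isMinOn_iff.mp ha x hx
    have h2 : ⟪x, w⟫ ≤ ⟪b, w⟫ := isMaxOn_iff.mp hb x hx
    have e1 : ⟪x - a, w⟫ = ⟪x, w⟫ - ⟪a, w⟫ := inner_sub_left x a w
    have e2 : d = ⟪b, w⟫ - ⟪a, w⟫ := by rw [hddef, inner_sub_left]
    exact ⟨by linarith, by linarith⟩
  have hd0 : 0 ≤ d := (hcoef b hbF).1
  have hba : b - a = d • w := hrep b hbF
  have hFsub : F ⊆ segment ℝ a b := by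
    intro x hx
    obtain ⟨hx0, hxd⟩ := hcoef x hx
    by_cases hdz : d = 0
    · have hx0' : ⟪x - a, w⟫ = 0 := le_antisymm (hdz ▸ hxd) hx0
      have hxa : x = a := by
        have h := hrep x hx
        rw [hx0', zero_smul] at h
        exact sub_eq_zero.mp h
      rw [hxa]
      exact left_mem_segment ℝ a b
    · rw [segment_eq_image']
      have hdpos : 0 < d := lt_of_le_of_ne hd0 (Ne.symm hdz)
      refine ⟨⟪x - a, w⟫ / d, ⟨div_nonneg hx0 hd0, (div_le_one hdpos).2 hxd⟩, ?_⟩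
      show a + (⟪x - a, w⟫ / d) • (b - a) = x
      rw [hba, smul_smul, div_mul_cancel₀ _ hdz, ← hrep x hx]
      abel
  have hdab : dist a b = d := by
    rw [dist_eq_norm, ← norm_neg, neg_sub, hba, norm_smul, hwnorm, mul_one,
      Real.norm_eq_abs, abs_of_nonneg hd0]
  have hchain : ENNReal.ofReal (dist p q) ≤ ENNReal.ofReal d := by
    calc ENNReal.ofReal (dist p q) = edist p q := (edist_dist p q).symm
    _ ≤ μH[1] F := hFlow
    _ ≤ μH[1] (segment ℝ a b) := measure_mono hFsub
    _ = edist a b := hausdorffMeasure_segment a b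
    _ = ENNReal.ofReal d := by rw [edist_dist, hdab]
  have hdist : dist p q ≤ d := (ENNReal.ofReal_le_ofReal_iff hd0).mp hchain
  have hqpnorm : ‖q - p‖ = dist p q := by rw [dist_eq_norm, norm_sub_rev]
  have hqppos : 0 < ‖q - p‖ := norm_pos_iff.2 hqpne
  set s : ℝ := d / ‖q - p‖ with hsdef
  have hs1 : (1:ℝ) ≤ s := (one_le_div hqppos).2 (by rw [hqpnorm]; exact hdist)
  have hspos : (0:ℝ) < s := lt_of_lt_of_le one_pos hs1
  have hba' : b - a = s • (q - p) := by
    rw [hba, hwdef, smul_smul, hsdef, div_eq_mul_inv]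
  -- segment a b lies on frontier L
  have hsegab : segment ℝ a b ⊆ frontier L := by
    intro x hx
    have hxL : x ∈ L := hLv.segment_subset (hFL haF) (hFL hbF) hx
    have hbau : ⟪b - a, u⟫ = 0 := hFinner a haF b hbF
    have hxau : ⟪x - a, u⟫ = 0 := by
      rw [segment_eq_image'] at hx
      obtain ⟨t, -, rfl⟩ := hx
      rw [add_sub_cancel_left, real_inner_smul_left, hbau, mul_zero]
    have hxn : IsOuterNormal L x u := by
      intro z hz
      have h1 : ⟪z - a, u⟫ ≤ 0 := haF.2 z hz
      have h2 : z - x = (z - a) + (a - x) := by abel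
      have h3 : ⟪a - x, u⟫ = -⟪x - a, u⟫ := by rw [← neg_sub x a, inner_neg_left]
      rw [h2, inner_add_left]
      linarith
    have hxint : x ∉ interior L := by
      intro hxi
      rw [mem_interior_iff_mem_nhds, Metric.mem_nhds_iff] at hxi
      obtain ⟨ε, hε, hball⟩ := hxi
      have hmem : x + (ε/2) • u ∈ L := by
        apply hball
        rw [mem_ball_iff_norm, add_sub_cancel_left, norm_smul, hu1, mul_one,
          Real.norm_eq_abs, abs_of_pos (by linarith)]
        linarith
      have hc : ⟪x + (ε/2) • u - x, u⟫ ≤ 0 := hxn _ hmem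
      rw [add_sub_cancel_left, real_inner_smul_left, real_inner_self_eq_norm_mul_norm, hu1] at hc
      nlinarith
    exact ⟨subset_closure hxL, hxint⟩
  -- final: translate of the segment
  refine ⟨a - p, ?_⟩
  intro y hy
  obtain ⟨z, hz, rfl⟩ := hy
  apply hsegab
  rw [segment_eq_image'] at hz
  obtain ⟨t, ⟨ht0, ht1⟩, rfl⟩ := hz
  rw [segment_eq_image']
  refine ⟨t / s, ⟨div_nonneg ht0 (le_of_lt hspos), (div_le_one hspos).2 (le_trans ht1 hs1)⟩, ?_⟩
  show a + (t / s) • (b - a) = (a - p) +ᵥ (p + t • (q - p))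
  rw [hba', smul_smul, div_mul_cancel₀ _ (ne_of_gt hspos)]
  show a + t • (q - p) = (a - p) + (p + t • (q - p))
  abel

end
end

section
/- Let Γ, Θ : ℝ → ℝ² be twice continuously differentiable curves parametrized by arclength (‖Γ'‖ ≡ ‖Θ'‖ ≡ 1), and let s̄, t̄, S̄, T̄ ∈ ℝ satisfy Θ(T̄) − Θ(S̄) = Γ(t̄) − Γ(s̄) and det(Θ'(S̄), Θ'(T̄)) ≠ 0. Then there are an open neighborhood U of (s̄,t̄) and twice continuously differentiable functions S, T : U → ℝ with S(s̄,t̄) = S̄, T(s̄,t̄) = T̄ and Θ(T(s,t)) − Θ(S(s,t)) = Γ(t) − Γ(s) for all (s,t) ∈ U; moreover, writing D = det(Θ'(S̄),Θ'(T̄)), the first partial derivatives at (s̄,t̄) are ∂_s S = det(Γ'(s̄),Θ'(T̄))/D, ∂_t S = det(Θ'(T̄),Γ'(t̄))/D, ∂_s T = det(Γ'(s̄),Θ'(S̄))/D, ∂_t T = det(Θ'(S̄),Γ'(t̄))/D. -/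
open Set MeasureTheory Metric Filter Pointwise
open scoped RealInnerProductSpace ENNReal Topology

noncomputable section

lemma det2_neg_eq (u w : E2) : det2 u (-w) = det2 w u := by
  have h0 : (-w) 0 = -(w 0) := rfl
  have h1 : (-w) 1 = -(w 1) := rfl
  simp only [det2, h0, h1]; ring

lemma det2_zero_right (u : E2) : det2 u 0 = 0 := by
  have h0 : (0 : E2) 0 = 0 := rfl
  have h1 : (0 : E2) 1 = 0 := rfl
  simp only [det2, h0, h1]; ring

lemma solve_det2 {u v w : E2} {a b : ℝ} (hD : det2 u v ≠ 0) (h : b • v - a • u = w) :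
    a = det2 v w / det2 u v ∧ b = det2 u w / det2 u v := by
  have h0 : b * v 0 - a * u 0 = w 0 := congrArg (fun z : E2 => z 0) h
  have h1 : b * v 1 - a * u 1 = w 1 := congrArg (fun z : E2 => z 1) h
  constructor
  · rw [eq_div_iff hD]; simp only [det2, ← h0, ← h1]; ring
  · rw [eq_div_iff hD]; simp only [det2, ← h0, ← h1]; ring


/-- implicit function lemma for `Θ(T(s,t)) - Θ(S(s,t)) = Γ(t) - Γ(s)`,
with the formulas for the first partial derivatives. -/
theorem implicit_function_lemma (Γ Θ : ℝ → E2) (hΓ : ContDiff ℝ 2 Γ) (hΘ : ContDiff ℝ 2 Θ)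
    (hΓu : ∀ s, ‖deriv Γ s‖ = 1) (hΘu : ∀ s, ‖deriv Θ s‖ = 1)
    (sb tb Sb Tb : ℝ) (heq : Θ Tb - Θ Sb = Γ tb - Γ sb)
    (hdet : det2 (deriv Θ Sb) (deriv Θ Tb) ≠ 0) :
    ∃ U : Set (ℝ × ℝ), IsOpen U ∧ (sb, tb) ∈ U ∧
      ∃ S T : ℝ × ℝ → ℝ, ContDiffOn ℝ 2 S U ∧ ContDiffOn ℝ 2 T U ∧
        S (sb, tb) = Sb ∧ T (sb, tb) = Tb ∧
        (∀ v ∈ U, Θ (T v) - Θ (S v) = Γ v.2 - Γ v.1) ∧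
        deriv (fun s => S (s, tb)) sb =
          det2 (deriv Γ sb) (deriv Θ Tb) / det2 (deriv Θ Sb) (deriv Θ Tb) ∧
        deriv (fun t => S (sb, t)) tb =
          det2 (deriv Θ Tb) (deriv Γ tb) / det2 (deriv Θ Sb) (deriv Θ Tb) ∧
        deriv (fun s => T (s, tb)) sb =
          det2 (deriv Γ sb) (deriv Θ Sb) / det2 (deriv Θ Sb) (deriv Θ Tb) ∧
        deriv (fun t => T (sb, t)) tb =
          det2 (deriv Θ Sb) (deriv Γ tb) / det2 (deriv Θ Sb) (deriv Θ Tb) := by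
  have h12 : (2 : WithTop ℕ∞) ≠ 0 := two_ne_zero
  have hΓd : Differentiable ℝ Γ := hΓ.differentiable two_ne_zero
  have hΘd : Differentiable ℝ Θ := hΘ.differentiable two_ne_zero
  set Φ : (ℝ × ℝ) × (ℝ × ℝ) → (ℝ × ℝ) × E2 :=
    fun x => (x.1, Θ x.2.2 - Θ x.2.1 - Γ x.1.2 + Γ x.1.1) with hΦdef
  set a : (ℝ × ℝ) × (ℝ × ℝ) := ((sb, tb), (Sb, Tb)) with hadef
  have hΦ : ContDiff ℝ 2 Φ := by
    apply ContDiff.prodMk contDiff_fst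
    exact (((hΘ.comp (contDiff_snd.comp contDiff_snd)).sub
      (hΘ.comp (contDiff_fst.comp contDiff_snd))).sub
      (hΓ.comp (contDiff_snd.comp contDiff_fst))).add
      (hΓ.comp (contDiff_fst.comp contDiff_fst))
  -- the derivative of Φ at a
  set q1 : ((ℝ×ℝ)×(ℝ×ℝ)) →L[ℝ] ℝ :=
    (ContinuousLinearMap.fst ℝ ℝ ℝ).comp (ContinuousLinearMap.snd ℝ (ℝ×ℝ) (ℝ×ℝ)) with hq1def
  set q2 : ((ℝ×ℝ)×(ℝ×ℝ)) →L[ℝ] ℝ :=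
    (ContinuousLinearMap.snd ℝ ℝ ℝ).comp (ContinuousLinearMap.snd ℝ (ℝ×ℝ) (ℝ×ℝ)) with hq2def
  set p1 : ((ℝ×ℝ)×(ℝ×ℝ)) →L[ℝ] ℝ :=
    (ContinuousLinearMap.fst ℝ ℝ ℝ).comp (ContinuousLinearMap.fst ℝ (ℝ×ℝ) (ℝ×ℝ)) with hp1def
  set p2 : ((ℝ×ℝ)×(ℝ×ℝ)) →L[ℝ] ℝ :=
    (ContinuousLinearMap.snd ℝ ℝ ℝ).comp (ContinuousLinearMap.fst ℝ (ℝ×ℝ) (ℝ×ℝ)) with hp2def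
  set L : ((ℝ×ℝ)×(ℝ×ℝ)) →L[ℝ] E2 :=
    ((1 : ℝ →L[ℝ] ℝ).smulRight (deriv Θ Tb)).comp q2
      - ((1 : ℝ →L[ℝ] ℝ).smulRight (deriv Θ Sb)).comp q1
      - ((1 : ℝ →L[ℝ] ℝ).smulRight (deriv Γ tb)).comp p2
      + ((1 : ℝ →L[ℝ] ℝ).smulRight (deriv Γ sb)).comp p1 with hLdef
  set f' : ((ℝ×ℝ)×(ℝ×ℝ)) →L[ℝ] ((ℝ×ℝ) × E2) :=
    (ContinuousLinearMap.fst ℝ (ℝ×ℝ) (ℝ×ℝ)).prod L with hf'def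
  have hf'app : ∀ x : (ℝ×ℝ)×(ℝ×ℝ),
      f' x = (x.1, x.2.2 • deriv Θ Tb - x.2.1 • deriv Θ Sb
        - x.1.2 • deriv Γ tb + x.1.1 • deriv Γ sb) := fun x => rfl
  have hΘTf : HasFDerivAt Θ ((1 : ℝ →L[ℝ] ℝ).smulRight (deriv Θ Tb)) Tb :=
    (hΘd Tb).hasDerivAt.hasFDerivAt
  have hΘSf : HasFDerivAt Θ ((1 : ℝ →L[ℝ] ℝ).smulRight (deriv Θ Sb)) Sb :=
    (hΘd Sb).hasDerivAt.hasFDerivAt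
  have hΓtf : HasFDerivAt Γ ((1 : ℝ →L[ℝ] ℝ).smulRight (deriv Γ tb)) tb :=
    (hΓd tb).hasDerivAt.hasFDerivAt
  have hΓsf : HasFDerivAt Γ ((1 : ℝ →L[ℝ] ℝ).smulRight (deriv Γ sb)) sb :=
    (hΓd sb).hasDerivAt.hasFDerivAt
  have h1 : HasFDerivAt (fun x : (ℝ×ℝ)×(ℝ×ℝ) => Θ x.2.2)
      (((1 : ℝ →L[ℝ] ℝ).smulRight (deriv Θ Tb)).comp q2) a := hΘTf.comp a q2.hasFDerivAt
  have h2 : HasFDerivAt (fun x : (ℝ×ℝ)×(ℝ×ℝ) => Θ x.2.1)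
      (((1 : ℝ →L[ℝ] ℝ).smulRight (deriv Θ Sb)).comp q1) a := hΘSf.comp a q1.hasFDerivAt
  have h3 : HasFDerivAt (fun x : (ℝ×ℝ)×(ℝ×ℝ) => Γ x.1.2)
      (((1 : ℝ →L[ℝ] ℝ).smulRight (deriv Γ tb)).comp p2) a := hΓtf.comp a p2.hasFDerivAt
  have h4 : HasFDerivAt (fun x : (ℝ×ℝ)×(ℝ×ℝ) => Γ x.1.1)
      (((1 : ℝ →L[ℝ] ℝ).smulRight (deriv Γ sb)).comp p1) a := hΓsf.comp a p1.hasFDerivAt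
  have hf'at : HasFDerivAt Φ f' a :=
    HasFDerivAt.prodMk ((ContinuousLinearMap.fst ℝ (ℝ×ℝ) (ℝ×ℝ)).hasFDerivAt) (((h1.sub h2).sub h3).add h4)
  -- f' is bijective
  have hker : ∀ x : (ℝ×ℝ)×(ℝ×ℝ), f' x = 0 → x = 0 := by
    intro x hx
    rw [hf'app x] at hx
    have hx1 : x.1 = (0 : ℝ×ℝ) := congrArg Prod.fst hx
    have hx2 : x.2.2 • deriv Θ Tb - x.2.1 • deriv Θ Sb
        - x.1.2 • deriv Γ tb + x.1.1 • deriv Γ sb = 0 := congrArg Prod.snd hx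
    have hx11 : x.1.1 = 0 := congrArg Prod.fst hx1
    have hx12 : x.1.2 = 0 := congrArg Prod.snd hx1
    rw [hx11, hx12, zero_smul, zero_smul, sub_zero, add_zero] at hx2
    obtain ⟨e1, e2⟩ := solve_det2 hdet hx2
    rw [det2_zero_right, zero_div] at e1
    rw [det2_zero_right, zero_div] at e2
    exact Prod.ext hx1 (Prod.ext e1 e2)
  have hinj : Function.Injective (f'.toLinearMap) := by
    rw [← LinearMap.ker_eq_bot, LinearMap.ker_eq_bot']
    exact fun m hm => hker m hm
  have hsurj : Function.Surjective (f'.toLinearMap) :=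
    (LinearMap.injective_iff_surjective_of_finrank_eq_finrank (by simp)).mp hinj
  set e : ((ℝ×ℝ)×(ℝ×ℝ)) ≃L[ℝ] ((ℝ×ℝ) × E2) :=
    (LinearEquiv.ofBijective f'.toLinearMap ⟨hinj, hsurj⟩).toContinuousLinearEquiv with hedef
  have hcoe : (e : ((ℝ×ℝ)×(ℝ×ℝ)) →L[ℝ] ((ℝ×ℝ) × E2)) = f' :=
    ContinuousLinearMap.ext fun x => rfl
  have hf'e : HasFDerivAt Φ (e : ((ℝ×ℝ)×(ℝ×ℝ)) →L[ℝ] ((ℝ×ℝ) × E2)) a := by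
    rw [hcoe]; exact hf'at
  have hΦa : ContDiffAt ℝ 2 Φ a := hΦ.contDiffAt
  -- local inverse
  set g : ((ℝ×ℝ) × E2) → ((ℝ×ℝ)×(ℝ×ℝ)) := hΦa.localInverse hf'e h12 with hgdef
  have hgC : ContDiffAt ℝ 2 g (Φ a) := hΦa.to_localInverse hf'e h12
  have hga : g (Φ a) = a := hΦa.localInverse_apply_image hf'e h12
  have hgr : ∀ᶠ y in 𝓝 (Φ a), Φ (g y) = y :=
    (hΦa.hasStrictFDerivAt' hf'e h12).eventually_right_inverse
  have hΦa0 : Φ a = ((sb, tb), (0 : E2)) := by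
    rw [hΦdef]
    refine Prod.ext rfl ?_
    show Θ Tb - Θ Sb - Γ tb + Γ sb = 0
    rw [heq]; abel
  obtain ⟨W, hWmem, hgW⟩ := hgC.contDiffOn le_rfl (by simp)
  have hmem2 : {y : (ℝ×ℝ) × E2 | Φ (g y) = y} ∩ W ∈ 𝓝 (Φ a) := Filter.inter_mem hgr hWmem
  obtain ⟨V, hVsub, hVopen, haV⟩ := _root_.mem_nhds_iff.mp hmem2
  set Uset : Set (ℝ × ℝ) := (fun v : ℝ × ℝ => (v, (0 : E2))) ⁻¹' V with hUdef
  have hUopen : IsOpen Uset := hVopen.preimage (continuous_id.prodMk continuous_const)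
  have hUmem : (sb, tb) ∈ Uset := by
    show ((sb, tb), (0 : E2)) ∈ V
    rw [← hΦa0]; exact haV
  set Sf : ℝ × ℝ → ℝ := fun v => (g (v, 0)).2.1 with hSdef
  set Tf : ℝ × ℝ → ℝ := fun v => (g (v, 0)).2.2 with hTdef
  have hcomp : ContDiffOn ℝ 2 (fun v : ℝ × ℝ => g (v, (0 : E2))) Uset :=
    ContDiffOn.comp (hgW.mono fun y hy => (hVsub hy).2)
      ((contDiff_id.prodMk contDiff_const).contDiffOn) (fun v hv => hv)
  have hScd : ContDiffOn ℝ 2 Sf Uset :=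
    (contDiff_fst.comp contDiff_snd).comp_contDiffOn hcomp
  have hTcd : ContDiffOn ℝ 2 Tf Uset :=
    (contDiff_snd.comp contDiff_snd).comp_contDiffOn hcomp
  have hg0 : g ((sb, tb), (0 : E2)) = a := by rw [← hΦa0]; exact hga
  have hS0 : Sf (sb, tb) = Sb := by rw [hSdef]; show (g ((sb,tb), 0)).2.1 = Sb; rw [hg0]
  have hT0 : Tf (sb, tb) = Tb := by rw [hTdef]; show (g ((sb,tb), 0)).2.2 = Tb; rw [hg0]
  have hinveq : ∀ v ∈ Uset, Θ (Tf v) - Θ (Sf v) = Γ v.2 - Γ v.1 := by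
    intro v hv
    have h1' : Φ (g (v, 0)) = (v, (0 : E2)) := (hVsub hv).1
    rw [hΦdef] at h1'
    simp only [Prod.mk.injEq] at h1'
    obtain ⟨hz1, hz2⟩ := h1'
    rw [hz1] at hz2
    have h3' : Θ (Tf v) - Θ (Sf v) - (Γ v.2 - Γ v.1) = 0 := by
      calc Θ (Tf v) - Θ (Sf v) - (Γ v.2 - Γ v.1)
          = Θ ((g (v, 0)).2.2) - Θ ((g (v, 0)).2.1) - Γ v.2 + Γ v.1 := by rw [hSdef, hTdef]; abel
        _ = 0 := hz2
    exact sub_eq_zero.mp h3'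
  -- derivatives in the first variable
  have hSA : ContDiffAt ℝ 2 Sf (sb, tb) := hScd.contDiffAt (hUopen.mem_nhds hUmem)
  have hTA : ContDiffAt ℝ 2 Tf (sb, tb) := hTcd.contDiffAt (hUopen.mem_nhds hUmem)
  have hSs : HasDerivAt (fun s => Sf (s, tb)) (deriv (fun s => Sf (s, tb)) sb) sb :=
    (show DifferentiableAt ℝ (fun s => Sf (s, tb)) sb from
      (hSA.comp sb ((contDiff_id.prodMk contDiff_const).contDiffAt)).differentiableAt h12).hasDerivAt
  have hTs : HasDerivAt (fun s => Tf (s, tb)) (deriv (fun s => Tf (s, tb)) sb) sb :=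
    (show DifferentiableAt ℝ (fun s => Tf (s, tb)) sb from
      (hTA.comp sb ((contDiff_id.prodMk contDiff_const).contDiffAt)).differentiableAt h12).hasDerivAt
  have hSt : HasDerivAt (fun t => Sf (sb, t)) (deriv (fun t => Sf (sb, t)) tb) tb :=
    ((hSA.comp tb ((contDiff_const.prodMk contDiff_id).contDiffAt)).differentiableAt h12).hasDerivAt
  have hTt : HasDerivAt (fun t => Tf (sb, t)) (deriv (fun t => Tf (sb, t)) tb) tb :=
    ((hTA.comp tb ((contDiff_const.prodMk contDiff_id).contDiffAt)).differentiableAt h12).hasDerivAt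
  have hΘT' : HasDerivAt Θ (deriv Θ Tb) (Tf (sb, tb)) := by rw [hT0]; exact (hΘd Tb).hasDerivAt
  have hΘS' : HasDerivAt Θ (deriv Θ Sb) (Sf (sb, tb)) := by rw [hS0]; exact (hΘd Sb).hasDerivAt
  -- s-direction
  have hchainS : HasDerivAt (fun s => Θ (Tf (s, tb)) - Θ (Sf (s, tb)))
      ((deriv (fun s => Tf (s, tb)) sb) • deriv Θ Tb
        - (deriv (fun s => Sf (s, tb)) sb) • deriv Θ Sb) sb :=
    (hΘT'.scomp_of_eq sb hTs rfl).sub (hΘS'.scomp_of_eq sb hSs rfl)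
  have hEs : (fun s => Θ (Tf (s, tb)) - Θ (Sf (s, tb))) =ᶠ[𝓝 sb] (fun s => Γ tb - Γ s) := by
    have hUs : {s : ℝ | (s, tb) ∈ Uset} ∈ 𝓝 sb :=
      (hUopen.preimage (continuous_id.prodMk continuous_const)).mem_nhds hUmem
    filter_upwards [hUs] with s hs
    exact hinveq (s, tb) hs
  have hRs : HasDerivAt (fun s => Γ tb - Γ s)
      ((deriv (fun s => Tf (s, tb)) sb) • deriv Θ Tb
        - (deriv (fun s => Sf (s, tb)) sb) • deriv Θ Sb) sb :=
    hchainS.congr_of_eventuallyEq hEs.symm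
  have hRs' : HasDerivAt (fun s => Γ tb - Γ s) ((0 : E2) - deriv Γ sb) sb :=
    (hasDerivAt_const sb (Γ tb)).sub (hΓd sb).hasDerivAt
  have hkeyS : (deriv (fun s => Tf (s, tb)) sb) • deriv Θ Tb
      - (deriv (fun s => Sf (s, tb)) sb) • deriv Θ Sb = -(deriv Γ sb) := by
    have := hRs.unique hRs'
    rw [zero_sub] at this
    exact this
  obtain ⟨eS, eT⟩ := solve_det2 hdet hkeyS
  rw [det2_neg_eq] at eS eT
  -- t-direction
  have hchainT : HasDerivAt (fun t => Θ (Tf (sb, t)) - Θ (Sf (sb, t)))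
      ((deriv (fun t => Tf (sb, t)) tb) • deriv Θ Tb
        - (deriv (fun t => Sf (sb, t)) tb) • deriv Θ Sb) tb :=
    (hΘT'.scomp_of_eq tb hTt rfl).sub (hΘS'.scomp_of_eq tb hSt rfl)
  have hEt : (fun t => Θ (Tf (sb, t)) - Θ (Sf (sb, t))) =ᶠ[𝓝 tb] (fun t => Γ t - Γ sb) := by
    have hUt : {t : ℝ | (sb, t) ∈ Uset} ∈ 𝓝 tb :=
      (hUopen.preimage (continuous_const.prodMk continuous_id)).mem_nhds hUmem
    filter_upwards [hUt] with t ht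
    exact hinveq (sb, t) ht
  have hRt : HasDerivAt (fun t => Γ t - Γ sb)
      ((deriv (fun t => Tf (sb, t)) tb) • deriv Θ Tb
        - (deriv (fun t => Sf (sb, t)) tb) • deriv Θ Sb) tb :=
    hchainT.congr_of_eventuallyEq hEt.symm
  have hRt' : HasDerivAt (fun t => Γ t - Γ sb) (deriv Γ tb - 0) tb :=
    (hΓd tb).hasDerivAt.sub (hasDerivAt_const tb (Γ sb))
  have hkeyT : (deriv (fun t => Tf (sb, t)) tb) • deriv Θ Tb
      - (deriv (fun t => Sf (sb, t)) tb) • deriv Θ Sb = deriv Γ tb := by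
    have := hRt.unique hRt'
    rw [sub_zero] at this
    exact this
  obtain ⟨eS', eT'⟩ := solve_det2 hdet hkeyT
  exact ⟨Uset, hUopen, hUmem, Sf, Tf, hScd, hTcd, hS0, hT0, hinveq, eS, eS', eT, eT'⟩

end
end

section
/- Under the hypotheses of the implicit function lemma for the equation Θ(T(s,t)) − Θ(S(s,t)) = Γ(t) − Γ(s), assume additionally that Θ''(S̄) = κ_p·J(Θ'(S̄)) and Θ''(T̄) = κ_q·J(Θ'(T̄)), where J is rotation by π/2, and write Γ'(s̄) = (cos γ_p, sin γ_p), Γ'(t̄) = (cos γ_q, sin γ_q), Θ'(S̄) = (cos θ_p, sin θ_p), Θ'(T̄) = (cos θ_q, sin θ_q) with sin(θ_q − θ_p) ≠ 0. Then the second mixed partial derivative of S at (s̄,t̄) equals ∂_s∂_t S = [κ_p·sin(γ_q − θ_q)·cos(θ_q − θ_p)·sin(θ_q − γ_p) − κ_q·sin(θ_p − γ_p)·sin(γ_q − θ_p)] / sin³(θ_q − θ_p). -/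
open Set MeasureTheory Metric Filter Pointwise
open scoped RealInnerProductSpace ENNReal Topology

noncomputable section

lemma e2_coord_hasDerivAt {f : ℝ → E2} {f' : E2} {x : ℝ} (hf : HasDerivAt f f' x) (i : Fin 2) :
    HasDerivAt (fun s => f s i) (f' i) x :=
  (EuclideanSpace.proj i : E2 →L[ℝ] ℝ).hasFDerivAt.comp_hasDerivAt x hf

lemma det2_hasDerivAt {f g : ℝ → E2} {f' g' : E2} {x : ℝ}
    (hf : HasDerivAt f f' x) (hg : HasDerivAt g g' x) :
    HasDerivAt (fun s => det2 (f s) (g s)) (det2 f' (g x) + det2 (f x) g') x := by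
  have h := ((e2_coord_hasDerivAt hf 0).mul (e2_coord_hasDerivAt hg 1)).sub
      ((e2_coord_hasDerivAt hf 1).mul (e2_coord_hasDerivAt hg 0))
  refine h.congr_deriv ?_
  simp only [det2]; ring

lemma solve_lin {u v w : E2} {a b : ℝ} (h : b • v - a • u = w) (hd : det2 u v ≠ 0) :
    a = - det2 w v / det2 u v ∧ b = det2 u w / det2 u v := by
  have h0 : b * v 0 - a * u 0 = w 0 := by rw [← h]; rfl
  have h1 : b * v 1 - a * u 1 = w 1 := by rw [← h]; rfl
  simp only [det2] at hd ⊢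
  constructor
  · rw [eq_div_iff hd]
    linear_combination (v 0) * h1 - (v 1) * h0
  · rw [eq_div_iff hd]
    linear_combination (u 0) * h1 - (u 1) * h0

lemma det2_neg_left (u v : E2) : det2 (-u) v = - det2 u v := by
  simp only [det2]; show -(u 0) * v 1 - -(u 1) * v 0 = _ ; ring

lemma det2_smul_left (r : ℝ) (u v : E2) : det2 (r • u) v = r * det2 u v := by
  show r * u 0 * v 1 - r * u 1 * v 0 = _ ; simp only [det2]; ring

lemma det2_smul_right (r : ℝ) (u v : E2) : det2 u (r • v) = r * det2 u v := by
  show u 0 * (r * v 1) - u 1 * (r * v 0) = _ ; simp only [det2]; ring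

lemma det2_neg_right (u v : E2) : det2 u (-v) = - det2 u v := by
  simp only [det2]; show u 0 * -(v 1) - u 1 * -(v 0) = _ ; ring

lemma det2_zero_left (v : E2) : det2 0 v = 0 := by
  show (0:ℝ) * v 1 - 0 * v 0 = 0; ring

lemma det2_angleVec (a b : ℝ) : det2 (angleVec a) (angleVec b) = Real.sin (b - a) := by
  show Real.cos a * Real.sin b - Real.sin a * Real.cos b = _
  rw [Real.sin_sub]; ring

lemma det2_angleVec_Jrot (a b : ℝ) :
    det2 (angleVec a) (Jrot (angleVec b)) = Real.cos (a - b) := by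
  show Real.cos a * Real.cos b - Real.sin a * (-(Real.sin b)) = _
  rw [Real.cos_sub]; ring

lemma det2_Jrot_angleVec (a b : ℝ) :
    det2 (Jrot (angleVec a)) (angleVec b) = - Real.cos (b - a) := by
  show -(Real.sin a) * Real.sin b - Real.cos a * Real.cos b = _
  rw [Real.cos_sub]; ring


set_option maxHeartbeats 2000000 in
/-- formula for the second mixed partial derivative `∂ₛ∂ₜS` of the
implicitly defined function `S`. -/
theorem mixed_partial_S_formula (Γ Θ : ℝ → E2) (hΓ : ContDiff ℝ 2 Γ) (hΘ : ContDiff ℝ 2 Θ)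
    (hΓu : ∀ s, ‖deriv Γ s‖ = 1) (hΘu : ∀ s, ‖deriv Θ s‖ = 1)
    (sb tb Sb Tb : ℝ) (heq : Θ Tb - Θ Sb = Γ tb - Γ sb)
    (hdet : det2 (deriv Θ Sb) (deriv Θ Tb) ≠ 0)
    (U : Set (ℝ × ℝ)) (hU : IsOpen U) (hmem : (sb, tb) ∈ U)
    (S T : ℝ × ℝ → ℝ) (hS : ContDiffOn ℝ 2 S U) (hT : ContDiffOn ℝ 2 T U)
    (hS0 : S (sb, tb) = Sb) (hT0 : T (sb, tb) = Tb)
    (himp : ∀ v ∈ U, Θ (T v) - Θ (S v) = Γ v.2 - Γ v.1)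
    (κp κq : ℝ)
    (hκp : deriv (deriv Θ) Sb = κp • Jrot (deriv Θ Sb))
    (hκq : deriv (deriv Θ) Tb = κq • Jrot (deriv Θ Tb))
    (γp γq θp θq : ℝ)
    (hγp : deriv Γ sb = angleVec γp) (hγq : deriv Γ tb = angleVec γq)
    (hθp : deriv Θ Sb = angleVec θp) (hθq : deriv Θ Tb = angleVec θq)
    (hsin : Real.sin (θq - θp) ≠ 0) :
    deriv (fun s => deriv (fun t => S (s, t)) tb) sb =
      (κp * Real.sin (γq - θq) * Real.cos (θq - θp) * Real.sin (θq - γp) -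
        κq * Real.sin (θp - γp) * Real.sin (γq - θp)) / (Real.sin (θq - θp)) ^ 3 := by
  have hΘd : Differentiable ℝ Θ := hΘ.differentiable (by norm_num)
  have hΓd : Differentiable ℝ Γ := hΓ.differentiable (by norm_num)
  have hA1 : ContDiff ℝ 1 (deriv Θ) :=
    ((contDiff_succ_iff_deriv (n := 1)).mp (by exact_mod_cast hΘ)).2.2
  have hAd : Differentiable ℝ (deriv Θ) := hA1.differentiable one_ne_zero
  set A := deriv Θ with hAdef
  -- Step 1: formula for the t-partial of S at any good point
  have claim1 : ∀ s t : ℝ, (s, t) ∈ U → det2 (A (S (s, t))) (A (T (s, t))) ≠ 0 →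
      deriv (fun t' => S (s, t')) t =
        - det2 (deriv Γ t) (A (T (s, t))) / det2 (A (S (s, t))) (A (T (s, t))) := by
    intro s t hv hd
    have hSdiff : DifferentiableAt ℝ S (s, t) :=
      (hS.contDiffAt (hU.mem_nhds hv)).differentiableAt two_ne_zero
    have hTdiff : DifferentiableAt ℝ T (s, t) :=
      (hT.contDiffAt (hU.mem_nhds hv)).differentiableAt two_ne_zero
    have hcurve : HasDerivAt (fun t' => (s, t')) ((0 : ℝ), (1 : ℝ)) t :=
      (hasDerivAt_const _ _).prodMk (hasDerivAt_id _)
    have hSt : HasDerivAt (fun t' => S (s, t')) (fderiv ℝ S (s, t) (0, 1)) t :=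
      hSdiff.hasFDerivAt.comp_hasDerivAt t hcurve
    have hTt : HasDerivAt (fun t' => T (s, t')) (fderiv ℝ T (s, t) (0, 1)) t :=
      hTdiff.hasFDerivAt.comp_hasDerivAt t hcurve
    have hΘT : HasDerivAt (fun t' => Θ (T (s, t')))
        (fderiv ℝ T (s, t) (0, 1) • A (T (s, t))) t :=
      ((hΘd _).hasDerivAt).scomp t hTt
    have hΘS : HasDerivAt (fun t' => Θ (S (s, t')))
        (fderiv ℝ S (s, t) (0, 1) • A (S (s, t))) t :=
      ((hΘd _).hasDerivAt).scomp t hSt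
    have hLHS := hΘT.sub hΘS
    have hevU : ∀ᶠ t' in 𝓝 t, (s, t') ∈ U :=
      (Continuous.prodMk_right s).continuousAt.preimage_mem_nhds (hU.mem_nhds hv)
    have heqf : (fun t' => Θ (T (s, t')) - Θ (S (s, t'))) =ᶠ[𝓝 t]
        (fun t' => Γ t' - Γ s) :=
      hevU.mono fun t' ht' => himp _ ht'
    have hRHS : HasDerivAt (fun t' => Γ t' - Γ s) (deriv Γ t) t :=
      ((hΓd t).hasDerivAt).sub_const _
    have hkey : fderiv ℝ T (s, t) (0, 1) • A (T (s, t)) -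
        fderiv ℝ S (s, t) (0, 1) • A (S (s, t)) = deriv Γ t :=
      hLHS.unique (hRHS.congr_of_eventuallyEq heqf)
    rw [hSt.deriv]
    exact (solve_lin hkey hd).1
  -- base-point determinant
  have hdet0 : det2 (A Sb) (A Tb) ≠ 0 := hdet
  -- Step 2: s-partials at the base point, as HasDerivAt with explicit values
  have hScurve : HasDerivAt (fun s' => (s', tb)) ((1 : ℝ), (0 : ℝ)) sb :=
    (hasDerivAt_id _).prodMk (hasDerivAt_const _ _)
  have hSdiff : DifferentiableAt ℝ S (sb, tb) :=
    (hS.contDiffAt (hU.mem_nhds hmem)).differentiableAt two_ne_zero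
  have hTdiff : DifferentiableAt ℝ T (sb, tb) :=
    (hT.contDiffAt (hU.mem_nhds hmem)).differentiableAt two_ne_zero
  have hSs : HasDerivAt (fun s' => S (s', tb)) (fderiv ℝ S (sb, tb) (1, 0)) sb :=
    hSdiff.hasFDerivAt.comp_hasDerivAt sb hScurve
  have hTs : HasDerivAt (fun s' => T (s', tb)) (fderiv ℝ T (sb, tb) (1, 0)) sb :=
    hTdiff.hasFDerivAt.comp_hasDerivAt sb hScurve
  have hΘTs : HasDerivAt (fun s' => Θ (T (s', tb)))
      (fderiv ℝ T (sb, tb) (1, 0) • A (T (sb, tb))) sb :=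
    ((hΘd _).hasDerivAt).scomp sb hTs
  have hΘSs : HasDerivAt (fun s' => Θ (S (s', tb)))
      (fderiv ℝ S (sb, tb) (1, 0) • A (S (sb, tb))) sb :=
    ((hΘd _).hasDerivAt).scomp sb hSs
  have hevU2 : ∀ᶠ s' in 𝓝 sb, (s', tb) ∈ U :=
    ((continuous_id.prodMk continuous_const).continuousAt).preimage_mem_nhds (hU.mem_nhds hmem)
  have heqf2 : (fun s' => Θ (T (s', tb)) - Θ (S (s', tb))) =ᶠ[𝓝 sb]
      (fun s' => Γ tb - Γ s') :=
    hevU2.mono fun s' hs' => himp _ hs'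
  have hRHS2 : HasDerivAt (fun s' => Γ tb - Γ s') (-(deriv Γ sb)) sb :=
    ((hΓd sb).hasDerivAt).const_sub _
  have hkey2 : fderiv ℝ T (sb, tb) (1, 0) • A (T (sb, tb)) -
      fderiv ℝ S (sb, tb) (1, 0) • A (S (sb, tb)) = -(deriv Γ sb) :=
    (hΘTs.sub hΘSs).unique (hRHS2.congr_of_eventuallyEq heqf2)
  rw [hS0, hT0] at hkey2
  obtain ⟨hpd, hqd⟩ := solve_lin hkey2 hdet0
  rw [det2_neg_left, neg_neg] at hpd
  set D : ℝ := det2 (A Sb) (A Tb) with hD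
  set pd : ℝ := det2 (deriv Γ sb) (A Tb) / D with hpddef
  set qd : ℝ := det2 (A Sb) (-(deriv Γ sb)) / D with hqddef
  rw [hpd] at hSs
  rw [hqd] at hTs
  -- Step 3: eventual equality with the explicit quotient function
  have hcurve2 : ContinuousAt (fun s' : ℝ => ((s', tb) : ℝ × ℝ)) sb :=
    (continuous_id.prodMk continuous_const).continuousAt
  have hScont : ContinuousAt (fun s' => S (s', tb)) sb :=
    Filter.Tendsto.comp (hS.continuousOn.continuousAt (hU.mem_nhds hmem)) hcurve2
  have hTcont : ContinuousAt (fun s' => T (s', tb)) sb :=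
    Filter.Tendsto.comp (hT.continuousOn.continuousAt (hU.mem_nhds hmem)) hcurve2
  have hAScont : ContinuousAt (fun s' => A (S (s', tb))) sb :=
    (hA1.continuous.continuousAt).comp hScont
  have hATcont : ContinuousAt (fun s' => A (T (s', tb))) sb :=
    (hA1.continuous.continuousAt).comp hTcont
  have hdcont : ContinuousAt (fun s' => det2 (A (S (s', tb))) (A (T (s', tb)))) sb := by
    simp only [det2]
    exact ((((EuclideanSpace.proj (0 : Fin 2)).continuous.continuousAt.comp hAScont).mul
      ((EuclideanSpace.proj (1 : Fin 2)).continuous.continuousAt.comp hATcont)).sub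
      (((EuclideanSpace.proj (1 : Fin 2)).continuous.continuousAt.comp hAScont).mul
      ((EuclideanSpace.proj (0 : Fin 2)).continuous.continuousAt.comp hATcont)))
  have hdne : ∀ᶠ s' in 𝓝 sb, det2 (A (S (s', tb))) (A (T (s', tb))) ≠ 0 := by
    apply hdcont.eventually_ne
    simpa [hS0, hT0] using hdet0
  have hev : (fun s' => deriv (fun t => S (s', t)) tb) =ᶠ[𝓝 sb]
      (fun s' => - det2 (deriv Γ tb) (A (T (s', tb))) /
        det2 (A (S (s', tb))) (A (T (s', tb)))) := by
    filter_upwards [hdne, hevU2] with s' h1 h2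
    exact claim1 s' tb h2 h1
  rw [hev.deriv_eq]
  -- Step 4: differentiate the quotient
  have hASd : HasDerivAt (fun s' => A (S (s', tb))) (pd • deriv A Sb) sb := by
    have h1 : HasDerivAt A (deriv A Sb) Sb := (hAd Sb).hasDerivAt
    have h2 := HasDerivAt.scomp (𝕜 := ℝ) sb (by rw [hS0]; exact h1) hSs
    exact h2
  have hATd : HasDerivAt (fun s' => A (T (s', tb))) (qd • deriv A Tb) sb := by
    have h1 : HasDerivAt A (deriv A Tb) Tb := (hAd Tb).hasDerivAt
    have h2 := HasDerivAt.scomp (𝕜 := ℝ) sb (by rw [hT0]; exact h1) hTs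
    exact h2
  have hNd : HasDerivAt (fun s' => det2 (deriv Γ tb) (A (T (s', tb))))
      (det2 (deriv Γ tb) (qd • deriv A Tb)) sb := by
    have h := det2_hasDerivAt (hasDerivAt_const sb (deriv Γ tb)) hATd
    simpa [det2_zero_left] using h
  have hDd : HasDerivAt (fun s' => det2 (A (S (s', tb))) (A (T (s', tb))))
      (det2 (pd • deriv A Sb) (A Tb) + det2 (A Sb) (qd • deriv A Tb)) sb := by
    have h := det2_hasDerivAt hASd hATd
    simpa [hS0, hT0] using h
  have hdne0 : det2 (A (S (sb, tb))) (A (T (sb, tb))) ≠ 0 := by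
    simpa [hS0, hT0] using hdet0
  have hφ := (hNd.neg).div hDd (by simpa [hS0, hT0] using hdet0)
  refine (hφ.deriv).trans ?_
  -- Step 5: final algebra
  have hsin' : Real.sin θq * Real.cos θp - Real.cos θq * Real.sin θp ≠ 0 := by
    rw [Real.sin_sub] at hsin; exact hsin
  simp only [hS0, hT0, hκp, hκq, hθp, hθq, hγp, hγq, hpddef, hqddef, hD, smul_smul, Pi.neg_apply,
    det2_smul_right, det2_smul_left, det2_neg_left, det2_neg_right, det2_angleVec,
    det2_angleVec_Jrot, det2_Jrot_angleVec]
  have e1 : Real.sin (θp - γp) = -Real.sin (γp - θp) := by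
    rw [← neg_sub γp θp, Real.sin_neg]
  have e2 : Real.sin (θq - γq) = -Real.sin (γq - θq) := by
    rw [← neg_sub γq θq, Real.sin_neg]
  have e3 : Real.cos (θp - θq) = Real.cos (θq - θp) := by
    rw [← neg_sub θq θp, Real.cos_neg]
  have key : Real.sin (γq - θp) =
      Real.sin (γq - θq) * Real.cos (θq - θp) + Real.cos (γq - θq) * Real.sin (θq - θp) := by
    rw [show γq - θp = (γq - θq) + (θq - θp) by ring, Real.sin_add]
  rw [e1, e2, e3, key]
  field_simp
  ring

end
end

section
/- For all real numbers θ, γ_p, γ_q with 0 < θ < π/2, θ < γ_p < π − θ, and π + θ < γ_q < γ_p + π, the following inequality holds: −sin²θ·cos(γ_p + γ_q) − cos(γ_p − γ_q) + cos²θ·cos(2θ + γ_p − γ_q) ≥ 0. Moreover, for fixed γ_p − γ_q the left-hand side is minimal exactly when γ_p + γ_q = 2π, and for 0 < θ, 0 < γ, γ + θ < π/2 one has the strict inequality cos(γ − θ) − cos²θ·cos(γ + θ) > 0. -/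
open Set MeasureTheory Metric Filter Pointwise
open scoped RealInnerProductSpace ENNReal Topology

noncomputable section

lemma key_trig (θ d : ℝ) (h1 : 0 < θ) (h2 : θ < Real.pi / 2) (h3 : -Real.pi < d)
    (h4 : d < -(2*θ)) :
    0 ≤ -(Real.sin θ)^2 - Real.cos d + (Real.cos θ)^2 * Real.cos (2*θ + d) := by
  set v : ℝ := -(d + θ) with hv
  have hvr1 : θ < v := by simp only [hv]; linarith
  have hvr2 : v < Real.pi - θ := by simp only [hv]; linarith
  have e1 : Real.cos d = Real.cos (v + θ) := by
    rw [show v + θ = -d by rw [hv]; ring, Real.cos_neg]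
  have e2 : Real.cos (2*θ + d) = Real.cos (v - θ) := by
    rw [show v - θ = -(2*θ + d) by rw [hv]; ring, Real.cos_neg]
  have hst : 0 < Real.sin θ := Real.sin_pos_of_pos_of_lt_pi h1 (by linarith [Real.pi_pos])
  have hct : 0 < Real.cos θ := Real.cos_pos_of_mem_Ioo ⟨by linarith, h2⟩
  have hs1 : Real.sin θ ≤ Real.sin v := by
    rcases le_total v (Real.pi / 2) with h | h
    · exact (Real.sin_lt_sin_of_lt_of_le_pi_div_two (by linarith) h hvr1).le
    · rw [← Real.sin_pi_sub v]
      exact (Real.sin_lt_sin_of_lt_of_le_pi_div_two (by linarith) (by linarith)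
        (by linarith)).le
  have hs2 : 0 ≤ Real.sin (v - θ) := Real.sin_nonneg_of_nonneg_of_le_pi (by linarith)
    (by linarith)
  have pyth := Real.sin_sq_add_cos_sq θ
  have expand : -(Real.sin θ)^2 - (Real.cos v * Real.cos θ - Real.sin v * Real.sin θ) +
      (Real.cos θ)^2 * (Real.cos v * Real.cos θ + Real.sin v * Real.sin θ) =
      Real.sin θ * (Real.sin v - Real.sin θ) +
      Real.cos θ * Real.sin θ * (Real.sin v * Real.cos θ - Real.cos v * Real.sin θ) := by
    linear_combination (Real.cos v * Real.cos θ) * pyth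
  rw [e1, e2, Real.cos_add, Real.cos_sub, expand, ← Real.sin_sub]
  have := mul_nonneg hst.le (sub_nonneg.2 hs1)
  have := mul_nonneg (mul_nonneg hct.le hst.le) hs2
  linarith

/-- the trigonometric inequalities used in the proof for the Euclidean
disk. -/
theorem trig_inequalities :
    (∀ θ γp γq : ℝ, 0 < θ → θ < Real.pi / 2 → θ < γp → γp < Real.pi - θ →
        Real.pi + θ < γq → γq < γp + Real.pi →
        0 ≤ -(Real.sin θ) ^ 2 * Real.cos (γp + γq) - Real.cos (γp - γq) +
          (Real.cos θ) ^ 2 * Real.cos (2 * θ + γp - γq)) ∧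
    (∀ θ γp γq γp' γq' : ℝ, 0 < θ → θ < Real.pi / 2 →
        θ < γp → γp < Real.pi - θ → Real.pi + θ < γq → γq < γp + Real.pi →
        θ < γp' → γp' < Real.pi - θ → Real.pi + θ < γq' → γq' < γp' + Real.pi →
        γp - γq = γp' - γq' → γp' + γq' = 2 * Real.pi →
        ((-(Real.sin θ) ^ 2 * Real.cos (γp' + γq') - Real.cos (γp' - γq') +
            (Real.cos θ) ^ 2 * Real.cos (2 * θ + γp' - γq')) ≤
          (-(Real.sin θ) ^ 2 * Real.cos (γp + γq) - Real.cos (γp - γq) +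
            (Real.cos θ) ^ 2 * Real.cos (2 * θ + γp - γq)) ∧
          (γp + γq ≠ 2 * Real.pi →
            (-(Real.sin θ) ^ 2 * Real.cos (γp' + γq') - Real.cos (γp' - γq') +
              (Real.cos θ) ^ 2 * Real.cos (2 * θ + γp' - γq')) <
            (-(Real.sin θ) ^ 2 * Real.cos (γp + γq) - Real.cos (γp - γq) +
              (Real.cos θ) ^ 2 * Real.cos (2 * θ + γp - γq))))) ∧
    (∀ θ γ : ℝ, 0 < θ → 0 < γ → γ + θ < Real.pi / 2 →
        0 < Real.cos (γ - θ) - (Real.cos θ) ^ 2 * Real.cos (γ + θ)) := by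
  refine ⟨?_, ?_, ?_⟩
  · intro θ γp γq h1 h2 h3 h4 h5 h6
    have key := key_trig θ (γp - γq) h1 h2 (by linarith) (by linarith)
    have hc : Real.cos (γp + γq) ≤ 1 := Real.cos_le_one _
    rw [show 2*θ + (γp - γq) = 2 * θ + γp - γq by ring] at key
    nlinarith [sq_nonneg (Real.sin θ)]
  · intro θ γp γq γp' γq' h1 h2 h3 h4 h5 h6 h3' h4' h5' h6' hd hs
    have hst : 0 < Real.sin θ := Real.sin_pos_of_pos_of_lt_pi h1 (by linarith [Real.pi_pos])
    rw [hs, Real.cos_two_pi, ← hd,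
      show 2 * θ + γp' - γq' = 2 * θ + (γp' - γq') by ring, ← hd,
      show 2 * θ + (γp - γq) = 2 * θ + γp - γq by ring]
    have hc : Real.cos (γp + γq) ≤ 1 := Real.cos_le_one _
    constructor
    · nlinarith [sq_nonneg (Real.sin θ)]
    · intro hne
      have hlt : Real.cos (γp + γq) < 1 := by
        rw [show γp + γq = (γp + γq - 2*Real.pi) + 2*Real.pi by ring, Real.cos_add_two_pi]
        refine lt_of_le_of_ne (Real.cos_le_one _) fun h => ?_
        have := (Real.cos_eq_one_iff_of_lt_of_lt (x := γp + γq - 2*Real.pi)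
          (by linarith [Real.pi_pos]) (by linarith [Real.pi_pos])).1 h
        exact hne (by linarith)
      nlinarith [mul_pos (pow_pos hst 2) (sub_pos.2 hlt)]
  · intro θ γ h1 h2 h3
    have hct : 0 < Real.cos (γ + θ) := Real.cos_pos_of_mem_Ioo ⟨by linarith [Real.pi_pos], h3⟩
    have h4 : Real.cos (γ + θ) < Real.cos (γ - θ) := by
      rw [← Real.cos_abs (γ - θ)]
      apply Real.cos_lt_cos_of_nonneg_of_le_pi (abs_nonneg _) (by linarith [Real.pi_pos])
      rw [abs_lt]; constructor <;> linarith
    nlinarith [Real.cos_sq_le_one θ, sq_nonneg (Real.cos θ)]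

end
end

section
/- Let κ₀ > 0, λ ∈ ℝ, a > 0, and let Θ : (−a, a) → ℝ² be the arclength-parametrized curve with Θ(0) = (0,0), Θ'(0) = (−1, 0), and signed curvature κ(s) = κ₀ − λ·s² for all |s| < a (i.e., Θ'(s) = (cos φ(s), sin φ(s)) with φ(0) = π and φ'(s) = κ(s)). Then, as s̄ → 0⁺, ‖Θ(s̄) − Θ(−s̄)‖ = 2s̄ − (κ₀²/3)·s̄³ + (κ₀·(8λ + κ₀³)/60)·s̄⁵ + O(s̄⁷). -/
open Set MeasureTheory Metric Filter Pointwise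
open scoped RealInnerProductSpace ENNReal Topology

noncomputable section

open Finset in
lemma cos_bound6' (u : ℝ) (hu : |u| ≤ 1) :
    |Real.cos u - (1 - u^2/2 + u^4/24)| ≤ |u|^6 := by
  have hb : ‖(u : ℂ) * Complex.I‖ ≤ 1 := by simpa using hu
  have h := Complex.exp_bound hb (n := 6) (by norm_num)
  have h3 : Complex.I ^ 3 = -Complex.I := by simp [pow_succ, Complex.I_sq]
  have h5 : Complex.I ^ 5 = Complex.I := by simp [pow_succ, Complex.I_sq]
  have hsum : (∑ m ∈ range 6, ((u:ℂ) * Complex.I) ^ m / m.factorial) =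
      Complex.ofReal (1 - u^2/2 + u^4/24) + Complex.ofReal (u - u^3/6 + u^5/120) * Complex.I := by
    simp only [Finset.sum_range_succ, Nat.factorial, mul_pow, h3, h5, Complex.I_sq]
    push_cast
    ring_nf
  have hre : Real.cos u - (1 - u^2/2 + u^4/24) =
      (Complex.exp ((u:ℂ) * Complex.I) - ∑ m ∈ range 6, ((u:ℂ) * Complex.I) ^ m / m.factorial).re := by
    rw [hsum]
    simp only [Complex.sub_re, Complex.add_re, Complex.ofReal_re, Complex.mul_re,
      Complex.I_re, Complex.I_im, Complex.ofReal_im, Complex.exp_ofReal_mul_I_re]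
    ring
  have habs : ‖(u:ℂ) * Complex.I‖ = |u| := by simp
  rw [hre]
  refine le_trans (Complex.abs_re_le_norm _) (le_trans h ?_)
  rw [habs]
  have h6 : (0:ℝ) ≤ |u|^6 := by positivity
  push_cast
  norm_num [Nat.factorial]
  nlinarith

lemma psi_abs_le (κ₀ lam s : ℝ) (hs : |s| ≤ 1) :
    |κ₀ * s - lam * s ^ 3 / 3| ≤ (|κ₀| + |lam| + 1) * |s| := by
  have hx3 : |s|^3 ≤ |s| := by
    have := pow_le_pow_of_le_one (abs_nonneg s) hs (by norm_num : 1 ≤ 3)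
    simpa using this
  calc |κ₀ * s - lam * s ^ 3 / 3| ≤ |κ₀ * s| + |lam * s ^ 3 / 3| := abs_sub _ _
    _ = |κ₀| * |s| + |lam| * |s|^3 / 3 := by rw [abs_mul, abs_div, abs_mul, abs_pow]; norm_num
    _ ≤ (|κ₀| + |lam| + 1) * |s| := by nlinarith [abs_nonneg lam, abs_nonneg s, abs_nonneg κ₀]

set_option maxHeartbeats 1000000 in
set_option maxHeartbeats 1000000 in
lemma pointwise_bound (κ₀ lam : ℝ) : ∃ M₁ : ℝ, 0 < M₁ ∧ ∀ x : ℝ, |x| ≤ 1 →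
    (|κ₀| + |lam| + 1) * |x| ≤ 1 →
    |Real.cos (κ₀ * x - lam * x ^ 3 / 3) -
      (1 - κ₀ ^ 2 / 2 * x ^ 2 + (κ₀ * lam / 3 + κ₀ ^ 4 / 24) * x ^ 4)| ≤ M₁ * x ^ 6 := by
  refine ⟨(|κ₀| + |lam| + 1)^6 +
    (|-((lam/3)^2/2) - κ₀^3*(lam/3)/6| + |κ₀^2*(lam/3)^2/4| + |-(κ₀*(lam/3)^3/6)| + |(lam/3)^4/24|)
    + 1, ?_, fun x hx1 hxA => ?_⟩
  · have a0 := abs_nonneg (-((lam/3)^2/2) - κ₀^3*(lam/3)/6)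
    have a1 := abs_nonneg (κ₀^2*(lam/3)^2/4)
    have a2 := abs_nonneg (-(κ₀*(lam/3)^3/6))
    have a3 := abs_nonneg ((lam/3)^4/24)
    have a4 : (0:ℝ) ≤ (|κ₀| + |lam| + 1)^6 := by positivity
    linarith
  have hx60 : (0:ℝ) ≤ x^6 := by positivity
  have hx6 : |x|^6 = x^6 := by rw [← abs_pow]; exact abs_of_nonneg hx60
  have huA : |κ₀ * x - lam * x ^ 3 / 3| ≤ (|κ₀| + |lam| + 1) * |x| := psi_abs_le κ₀ lam x hx1
  have hu1 : |κ₀ * x - lam * x ^ 3 / 3| ≤ 1 := le_trans huA hxA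
  have hc := cos_bound6' _ hu1
  have hupow : |κ₀ * x - lam * x ^ 3 / 3|^6 ≤ (|κ₀| + |lam| + 1)^6 * x^6 := by
    calc |κ₀ * x - lam * x ^ 3 / 3|^6 ≤ ((|κ₀| + |lam| + 1) * |x|)^6 :=
          pow_le_pow_left₀ (abs_nonneg _) huA 6
      _ = (|κ₀| + |lam| + 1)^6 * x^6 := by rw [mul_pow, hx6]
  set u := κ₀ * x - lam * x ^ 3 / 3 with hu
  have hpoly : (1 - u^2/2 + u^4/24) -
      (1 - κ₀ ^ 2 / 2 * x ^ 2 + (κ₀ * lam / 3 + κ₀ ^ 4 / 24) * x ^ 4) =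
      x^6 * ((-((lam/3)^2/2) - κ₀^3*(lam/3)/6) + (κ₀^2*(lam/3)^2/4)*x^2 +
        (-(κ₀*(lam/3)^3/6))*x^4 + ((lam/3)^4/24)*x^6) := by
    rw [hu]; ring
  have h2 : |x^2| ≤ 1 := by rw [abs_pow]; exact pow_le_one₀ (abs_nonneg x) hx1
  have h4 : |x^4| ≤ 1 := by rw [abs_pow]; exact pow_le_one₀ (abs_nonneg x) hx1
  have h6 : |x^6| ≤ 1 := by rw [abs_pow]; exact pow_le_one₀ (abs_nonneg x) hx1
  have hQ : |(-((lam/3)^2/2) - κ₀^3*(lam/3)/6) + (κ₀^2*(lam/3)^2/4)*x^2 +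
        (-(κ₀*(lam/3)^3/6))*x^4 + ((lam/3)^4/24)*x^6| ≤
      |-((lam/3)^2/2) - κ₀^3*(lam/3)/6| + |κ₀^2*(lam/3)^2/4| + |-(κ₀*(lam/3)^3/6)| + |(lam/3)^4/24| := by
    have t1 := abs_add_le ((-((lam/3)^2/2) - κ₀^3*(lam/3)/6) + (κ₀^2*(lam/3)^2/4)*x^2 +
        (-(κ₀*(lam/3)^3/6))*x^4) (((lam/3)^4/24)*x^6)
    have t2 := abs_add_le ((-((lam/3)^2/2) - κ₀^3*(lam/3)/6) + (κ₀^2*(lam/3)^2/4)*x^2)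
        ((-(κ₀*(lam/3)^3/6))*x^4)
    have t3 := abs_add_le (-((lam/3)^2/2) - κ₀^3*(lam/3)/6) ((κ₀^2*(lam/3)^2/4)*x^2)
    have b1 : |(κ₀^2*(lam/3)^2/4)*x^2| ≤ |κ₀^2*(lam/3)^2/4| := by
      rw [abs_mul]; exact mul_le_of_le_one_right (abs_nonneg _) h2
    have b2 : |(-(κ₀*(lam/3)^3/6))*x^4| ≤ |-(κ₀*(lam/3)^3/6)| := by
      rw [abs_mul]; exact mul_le_of_le_one_right (abs_nonneg _) h4
    have b3 : |((lam/3)^4/24)*x^6| ≤ |(lam/3)^4/24| := by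
      rw [abs_mul]; exact mul_le_of_le_one_right (abs_nonneg _) h6
    linarith
  calc |Real.cos u - (1 - κ₀ ^ 2 / 2 * x ^ 2 + (κ₀ * lam / 3 + κ₀ ^ 4 / 24) * x ^ 4)|
      ≤ |Real.cos u - (1 - u^2/2 + u^4/24)| +
        |(1 - u^2/2 + u^4/24) - (1 - κ₀ ^ 2 / 2 * x ^ 2 + (κ₀ * lam / 3 + κ₀ ^ 4 / 24) * x ^ 4)| :=
        abs_sub_le _ _ _
    _ ≤ (|κ₀| + |lam| + 1)^6 * x^6 +
        (|-((lam/3)^2/2) - κ₀^3*(lam/3)/6| + |κ₀^2*(lam/3)^2/4| + |-(κ₀*(lam/3)^3/6)| + |(lam/3)^4/24|) * x^6 := by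
        rw [hpoly, abs_mul, abs_of_nonneg hx60]
        have := mul_le_mul_of_nonneg_left hQ hx60
        nlinarith [hc, hupow]
    _ ≤ _ := by nlinarith

lemma norm_vec2 (x y : ℝ) : ‖vec2 x y‖ = Real.sqrt (x^2 + y^2) := by
  simp [vec2, EuclideanSpace.norm_eq, Fin.sum_univ_two, WithLp.equiv_symm_apply, sq_abs]

lemma vec2_eq_smul (x y : ℝ) : vec2 x y = x • vec2 1 0 + y • vec2 0 1 := by
  unfold vec2
  ext i
  fin_cases i <;> simp [WithLp.equiv_symm_apply]

set_option maxHeartbeats 1000000 in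
/-- asymptotic expansion of the chord length of a curve whose signed
curvature is `κ₀ - λ s²`. -/
theorem chord_length_asymptotics (κ₀ lam a : ℝ) (hκ₀ : 0 < κ₀) (ha : 0 < a)
    (Θ : ℝ → E2) (hΘ0 : Θ 0 = 0)
    (hΘ' : ∀ s : ℝ, |s| < a →
      deriv Θ s = angleVec (Real.pi + κ₀ * s - lam * s ^ 3 / 3)) :
    ∃ M s₁ : ℝ, 0 < M ∧ 0 < s₁ ∧ ∀ sb : ℝ, 0 < sb → sb < s₁ →
      |‖Θ sb - Θ (-sb)‖ -
        (2 * sb - κ₀ ^ 2 / 3 * sb ^ 3 + κ₀ * (8 * lam + κ₀ ^ 3) / 60 * sb ^ 5)| ≤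
      M * sb ^ 7 := by
  obtain ⟨M₁, hM₁, hpw⟩ := pointwise_bound κ₀ lam
  have hA0 : (0:ℝ) < |κ₀| + |lam| + 1 := by positivity
  refine ⟨2*M₁ + 1, min a (min 1 (|κ₀| + |lam| + 1)⁻¹), by positivity, by positivity,
    fun sb hsb0 hsb1 => ?_⟩
  have hsba : sb < a := lt_of_lt_of_le hsb1 (min_le_left _ _)
  have hsb2 : sb ≤ 1 := le_trans (le_of_lt hsb1) (le_trans (min_le_right _ _) (min_le_left _ _))
  have hsbA : sb ≤ (|κ₀| + |lam| + 1)⁻¹ :=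
    le_trans (le_of_lt hsb1) (le_trans (min_le_right _ _) (min_le_right _ _))
  have hsbA1 : (|κ₀| + |lam| + 1) * sb ≤ 1 := by
    have h := mul_le_mul_of_nonneg_left hsbA (le_of_lt hA0)
    rwa [mul_inv_cancel₀ (ne_of_gt hA0)] at h
  have hnormAV : ∀ θ : ℝ, ‖angleVec θ‖ = 1 := by
    intro θ
    rw [show angleVec θ = vec2 (Real.cos θ) (Real.sin θ) from rfl, norm_vec2,
      Real.cos_sq_add_sin_sq, Real.sqrt_one]
  have hcont1 : Continuous fun s : ℝ => Real.cos (Real.pi + κ₀ * s - lam * s ^ 3 / 3) := by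
    fun_prop
  have hcont2 : Continuous fun s : ℝ => Real.sin (Real.pi + κ₀ * s - lam * s ^ 3 / 3) := by
    fun_prop
  have hg : ∀ s ∈ Set.uIcc (-sb) sb, HasDerivAt Θ
      (Real.cos (Real.pi + κ₀ * s - lam * s ^ 3 / 3) • vec2 1 0 +
       Real.sin (Real.pi + κ₀ * s - lam * s ^ 3 / 3) • vec2 0 1) s := by
    intro s hs
    rw [Set.uIcc_of_le (by linarith)] at hs
    have hsa : |s| < a := lt_of_le_of_lt (abs_le.2 ⟨hs.1, hs.2⟩) hsba
    have hd := hΘ' s hsa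
    have hne : deriv Θ s ≠ 0 := by
      rw [hd]
      intro h
      have h1 := hnormAV (Real.pi + κ₀ * s - lam * s ^ 3 / 3)
      rw [h, norm_zero] at h1
      norm_num at h1
    have hD := (differentiableAt_of_deriv_ne_zero hne).hasDerivAt
    rw [hd, show angleVec (Real.pi + κ₀ * s - lam * s ^ 3 / 3) =
      vec2 (Real.cos (Real.pi + κ₀ * s - lam * s ^ 3 / 3))
        (Real.sin (Real.pi + κ₀ * s - lam * s ^ 3 / 3)) from rfl, vec2_eq_smul] at hD
    exact hD
  have hFTC := intervalIntegral.integral_eq_sub_of_hasDerivAt hg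
    (((hcont1.smul continuous_const).add (hcont2.smul continuous_const)).intervalIntegrable _ _)
  rw [intervalIntegral.integral_add
    (f := fun s => Real.cos (Real.pi + κ₀ * s - lam * s ^ 3 / 3) • vec2 1 0)
    (g := fun s => Real.sin (Real.pi + κ₀ * s - lam * s ^ 3 / 3) • vec2 0 1) ((hcont1.smul continuous_const).intervalIntegrable _ _)
    ((hcont2.smul continuous_const).intervalIntegrable _ _),
    intervalIntegral.integral_smul_const, intervalIntegral.integral_smul_const] at hFTC
  have hcosπ : ∀ s : ℝ, Real.cos (Real.pi + κ₀ * s - lam * s ^ 3 / 3) =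
      -Real.cos (κ₀ * s - lam * s ^ 3 / 3) := by
    intro s
    rw [show Real.pi + κ₀ * s - lam * s ^ 3 / 3 = (κ₀ * s - lam * s ^ 3 / 3) + Real.pi by ring,
      Real.cos_add_pi]
  have hsinπ : ∀ s : ℝ, Real.sin (Real.pi + κ₀ * s - lam * s ^ 3 / 3) =
      -Real.sin (κ₀ * s - lam * s ^ 3 / 3) := by
    intro s
    rw [show Real.pi + κ₀ * s - lam * s ^ 3 / 3 = (κ₀ * s - lam * s ^ 3 / 3) + Real.pi by ring,
      Real.sin_add_pi]
  have hccont : Continuous fun s : ℝ => Real.cos (κ₀ * s - lam * s ^ 3 / 3) := by fun_prop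
  have hscont : Continuous fun s : ℝ => Real.sin (κ₀ * s - lam * s ^ 3 / 3) := by fun_prop
  have hIsin : (∫ s in (-sb)..sb, Real.sin (Real.pi + κ₀ * s - lam * s ^ 3 / 3)) = 0 := by
    simp_rw [hsinπ]
    rw [intervalIntegral.integral_neg, neg_eq_zero]
    have hodd := intervalIntegral.integral_comp_neg (a := 0) (b := sb)
      (fun s => Real.sin (κ₀ * s - lam * s ^ 3 / 3))
    simp only [neg_zero] at hodd
    have heq : (∫ x in (0:ℝ)..sb, Real.sin (κ₀ * -x - lam * (-x) ^ 3 / 3)) =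
        -∫ x in (0:ℝ)..sb, Real.sin (κ₀ * x - lam * x ^ 3 / 3) := by
      rw [← intervalIntegral.integral_neg]
      apply intervalIntegral.integral_congr
      intro x _
      show Real.sin (κ₀ * -x - lam * (-x) ^ 3 / 3) = -Real.sin (κ₀ * x - lam * x ^ 3 / 3)
      rw [show κ₀ * -x - lam * (-x) ^ 3 / 3 = -(κ₀ * x - lam * x ^ 3 / 3) by ring, Real.sin_neg]
    rw [heq] at hodd
    have hsplit := intervalIntegral.integral_add_adjacent_intervals
      (a := -sb) (b := 0) (c := sb) (f := fun s => Real.sin (κ₀ * s - lam * s ^ 3 / 3))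
      (μ := MeasureTheory.volume)
      (hscont.intervalIntegrable _ _) (hscont.intervalIntegrable _ _)
    rw [← hsplit, ← hodd]
    ring
  have hIcos : (∫ s in (-sb)..sb, Real.cos (Real.pi + κ₀ * s - lam * s ^ 3 / 3)) =
      -∫ s in (-sb)..sb, Real.cos (κ₀ * s - lam * s ^ 3 / 3) := by
    simp_rw [hcosπ]
    rw [intervalIntegral.integral_neg]
  rw [hIcos, hIsin, zero_smul, add_zero] at hFTC
  have hnorm : ‖Θ sb - Θ (-sb)‖ = |∫ s in (-sb)..sb, Real.cos (κ₀ * s - lam * s ^ 3 / 3)| := by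
    rw [← hFTC, norm_smul, show ‖vec2 1 0‖ = 1 by rw [norm_vec2]; norm_num]
    simp [Real.norm_eq_abs, abs_neg]
  have hI0 : 0 ≤ ∫ s in (-sb)..sb, Real.cos (κ₀ * s - lam * s ^ 3 / 3) := by
    apply intervalIntegral.integral_nonneg (by linarith)
    intro x hx
    have hxsb : |x| ≤ sb := abs_le.2 ⟨hx.1, hx.2⟩
    have hx1 : |x| ≤ 1 := le_trans hxsb hsb2
    have hψ : |κ₀ * x - lam * x ^ 3 / 3| ≤ 1 := by
      have h1 := psi_abs_le κ₀ lam x hx1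
      have h2 : (|κ₀| + |lam| + 1) * |x| ≤ (|κ₀| + |lam| + 1) * sb :=
        mul_le_mul_of_nonneg_left hxsb (le_of_lt hA0)
      linarith
    have hpi2 : (1:ℝ) ≤ Real.pi / 2 := by linarith [Real.two_le_pi]
    apply Real.cos_nonneg_of_mem_Icc
    constructor
    · have := (abs_le.1 hψ).1; linarith
    · have := (abs_le.1 hψ).2; linarith
  have hpder : ∀ s ∈ Set.uIcc (-sb) sb, HasDerivAt
      (fun t => t - κ₀^2/6*t^3 + (κ₀ * lam / 3 + κ₀ ^ 4 / 24)/5*t^5)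
      (1 - κ₀ ^ 2 / 2 * s ^ 2 + (κ₀ * lam / 3 + κ₀ ^ 4 / 24) * s ^ 4) s := by
    intro s _
    have h1 := hasDerivAt_id s
    have h3 := (hasDerivAt_pow 3 s).const_mul (κ₀^2/6)
    have h5 := (hasDerivAt_pow 5 s).const_mul ((κ₀ * lam / 3 + κ₀ ^ 4 / 24)/5)
    have h := (h1.sub h3).add h5
    refine h.congr_deriv ?_
    push_cast
    ring
  have hPcont : Continuous fun s : ℝ =>
      1 - κ₀ ^ 2 / 2 * s ^ 2 + (κ₀ * lam / 3 + κ₀ ^ 4 / 24) * s ^ 4 := by fun_prop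
  have hPint : (∫ s in (-sb)..sb,
        (1 - κ₀ ^ 2 / 2 * s ^ 2 + (κ₀ * lam / 3 + κ₀ ^ 4 / 24) * s ^ 4)) =
      2 * sb - κ₀ ^ 2 / 3 * sb ^ 3 + κ₀ * (8 * lam + κ₀ ^ 3) / 60 * sb ^ 5 := by
    rw [intervalIntegral.integral_eq_sub_of_hasDerivAt hpder (hPcont.intervalIntegrable _ _)]
    ring
  have hdiff : (∫ s in (-sb)..sb, Real.cos (κ₀ * s - lam * s ^ 3 / 3)) -
      (2 * sb - κ₀ ^ 2 / 3 * sb ^ 3 + κ₀ * (8 * lam + κ₀ ^ 3) / 60 * sb ^ 5) =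
      ∫ s in (-sb)..sb, (Real.cos (κ₀ * s - lam * s ^ 3 / 3) -
        (1 - κ₀ ^ 2 / 2 * s ^ 2 + (κ₀ * lam / 3 + κ₀ ^ 4 / 24) * s ^ 4)) := by
    rw [intervalIntegral.integral_sub (hccont.intervalIntegrable _ _)
      (hPcont.intervalIntegrable _ _), hPint]
  have hbnd : ‖∫ s in (-sb)..sb, (Real.cos (κ₀ * s - lam * s ^ 3 / 3) -
        (1 - κ₀ ^ 2 / 2 * s ^ 2 + (κ₀ * lam / 3 + κ₀ ^ 4 / 24) * s ^ 4))‖ ≤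
      (M₁ * sb ^ 6) * |sb - (-sb)| := by
    apply intervalIntegral.norm_integral_le_of_norm_le_const
    intro x hx
    rw [Set.uIoc_of_le (by linarith)] at hx
    have hxsb : |x| ≤ sb := abs_le.2 ⟨le_of_lt hx.1, hx.2⟩
    have hx1 : |x| ≤ 1 := le_trans hxsb hsb2
    have hxA : (|κ₀| + |lam| + 1) * |x| ≤ 1 := by
      have h2 : (|κ₀| + |lam| + 1) * |x| ≤ (|κ₀| + |lam| + 1) * sb :=
        mul_le_mul_of_nonneg_left hxsb (le_of_lt hA0)
      linarith
    have hp := hpw x hx1 hxA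
    rw [Real.norm_eq_abs]
    refine le_trans hp ?_
    have hx6 : x^6 ≤ sb^6 := by
      calc x^6 = |x|^6 := by rw [← abs_pow, abs_of_nonneg (by positivity)]
        _ ≤ sb^6 := pow_le_pow_left₀ (abs_nonneg x) hxsb 6
    nlinarith [le_of_lt hM₁]
  rw [show |sb - (-sb)| = 2*sb by rw [abs_of_nonneg (by linarith)]; ring] at hbnd
  rw [hnorm, abs_of_nonneg hI0]
  rw [Real.norm_eq_abs] at hbnd
  calc |(∫ s in (-sb)..sb, Real.cos (κ₀ * s - lam * s ^ 3 / 3)) -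
      (2 * sb - κ₀ ^ 2 / 3 * sb ^ 3 + κ₀ * (8 * lam + κ₀ ^ 3) / 60 * sb ^ 5)|
      = |∫ s in (-sb)..sb, (Real.cos (κ₀ * s - lam * s ^ 3 / 3) -
        (1 - κ₀ ^ 2 / 2 * s ^ 2 + (κ₀ * lam / 3 + κ₀ ^ 4 / 24) * s ^ 4))| := by rw [hdiff]
    _ ≤ M₁ * sb ^ 6 * (2 * sb) := hbnd
    _ ≤ (2 * M₁ + 1) * sb ^ 7 := by nlinarith [pow_pos hsb0 7, pow_pos hsb0 6, le_of_lt hM₁]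

end
end
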